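/- arXiv:1108.4463 — 2 statements merged into one kernel-verified Lean document; each statement's English description precedes it below -/
import Mathlib

section
/- The cubic polynomial F(x0,x1,x2,x3) = -2·x0·x1·x2 + x3·(x1² - x2²) is irreducible over the real numbers. -/
/-!
As a polynomial in `x0` over `K[x1, x2, x3]`, `F = a * x0 + b` with `a = -2 x1 x2` and
`b = x3 (x1² - x2²)`, and a linear polynomial over a domain with relatively prime coefficients is
irreducible. Away from characteristic 2 the prime factors of `a` are `x1` and `x2`, and neither
divides `b`, since setting `x1 = 0` or `x2 = 0` leaves `-x3 x2²` or `x3 x1²`.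
-/

open MvPolynomial

namespace MvPolynomial

theorem not_X_dvd_of_aeval_update_ne_zero {σ R : Type*} [CommRing R] [DecidableEq σ]
    {i : σ} {p : MvPolynomial σ R}
    (h : aeval (Function.update (X : σ → MvPolynomial σ R) i 0) p ≠ 0) : ¬X i ∣ p := by
  rintro ⟨q, rfl⟩
  simp at h

theorem isUnit_neg_two {σ K : Type*} [Field K] [NeZero (2 : K)] :
    IsUnit (-2 : MvPolynomial σ K) := by
  rw [show (-2 : MvPolynomial σ K) = C (-2) by rw [map_neg, map_ofNat]]
  exact (neg_ne_zero.mpr two_ne_zero).isUnit.map C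

end MvPolynomial

noncomputable def lawsonCubic (R : Type*) [CommRing R] : MvPolynomial (Fin 4) R :=
  -2 * X 0 * X 1 * X 2 + X 3 * (X 1 ^ 2 - X 2 ^ 2)

theorem finSuccEquiv_lawsonCubic (R : Type*) [CommRing R] :
    finSuccEquiv R 3 (lawsonCubic R) =
      Polynomial.C (-2 * X 0 * X 1) * Polynomial.X + Polynomial.C (X 2 * (X 0 ^ 2 - X 1 ^ 2)) := by
  rw [lawsonCubic, show (1 : Fin 4) = Fin.succ 0 from rfl, show (2 : Fin 4) = Fin.succ 1 from rfl,
    show (3 : Fin 4) = Fin.succ 2 from rfl]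
  simp only [map_add, map_mul, map_sub, map_pow, map_neg, map_ofNat, finSuccEquiv_X_zero,
    finSuccEquiv_X_succ]
  ring

section

variable {K : Type*} [Field K] [NeZero (2 : K)]

theorem isRelPrime_lawsonCubic_coeffs :
    IsRelPrime ((-2 : MvPolynomial (Fin 3) K) * X 0 * X 1) (X 2 * (X 0 ^ 2 - X 1 ^ 2)) := by
  refine ((isUnit_neg_two (σ := Fin 3) (K := K)).isRelPrime_left.mul_left ?_).mul_left ?_ <;>
    refine X_prime.irreducible.isRelPrime_iff_not_dvd.mpr
      (not_X_dvd_of_aeval_update_ne_zero ?_) <;>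
    simp [Function.update, X_ne_zero]

theorem irreducible_lawsonCubic : Irreducible (lawsonCubic K) := by
  refine .of_map (f := finSuccEquiv K 3) ?_
  rw [finSuccEquiv_lawsonCubic]
  exact Polynomial.irreducible_C_mul_X_add_C
    (mul_ne_zero (mul_ne_zero isUnit_neg_two.ne_zero (X_ne_zero 0)) (X_ne_zero 1))
    isRelPrime_lawsonCubic_coeffs

end

theorem lawson_cubic_irreducible :
    Irreducible
      ((-2 : MvPolynomial (Fin 4) ℝ) * X 0 * X 1 * X 2 + X 3 * (X 1 ^ 2 - X 2 ^ 2)) :=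
  irreducible_lawsonCubic
end

section
/- Up to real scalar multiple, the unique real homogeneous quadratic polynomial on ℝ⁴ vanishing identically on the Clifford torus (in suitable orthonormal coordinates) is F = x0·x3 - x1·x2. -/
/-!
In the coordinates `p = x0 + x3`, `q = x1 - x2`, `r = x0 - x3`, `w = x1 + x2` the torus is
`S¹ × S¹ ⊂ ℝ² × ℝ²` and `4 (x0 x3 - x1 x2) = p² + q² - r² - w²`. Split a quadratic form on
`ℝ² × ℝ²` as `A u + B (u, v) + C v` with `A`, `C` quadratic and `B` bilinear. Replacing `u` by
`-u` shows that `B` and `A + C` vanish on `S¹ × S¹` separately. A bilinear form vanishing on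
`S¹ × S¹` is zero, and `A u = -C v` for all unit `u`, `v` forces `A` and `-C` to be the same
constant on the circle, i.e. the same multiple of `|·|²`.
-/

open Real

theorem bilinear_coeffs_eq_zero_of_forall_cos_sin {a b c d : ℝ}
    (h : ∀ s t : ℝ,
      a * cos s * cos t + b * cos s * sin t + c * sin s * cos t + d * sin s * sin t = 0) :
    a = 0 ∧ b = 0 ∧ c = 0 ∧ d = 0 := by
  have h₁ := h 0 0
  have h₂ := h 0 (π / 2)
  have h₃ := h (π / 2) 0
  have h₄ := h (π / 2) (π / 2)
  simp only [cos_zero, sin_zero, cos_pi_div_two, sin_pi_div_two] at h₁ h₂ h₃ h₄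
  refine ⟨?_, ?_, ?_, ?_⟩ <;> linarith

theorem quadratic_coeffs_of_forall_cos_sin_eq_const {a b c k : ℝ}
    (h : ∀ s : ℝ, a * cos s ^ 2 + b * cos s * sin s + c * sin s ^ 2 = k) :
    a = k ∧ b = 0 ∧ c = k := by
  have ha : a = k := by simpa using h 0
  have hc : c = k := by simpa using h (π / 2)
  refine ⟨ha, ?_, hc⟩
  have hb : b * cos (π / 4) * sin (π / 4) = 0 := by
    linear_combination h (π / 4) - k * sin_sq_add_cos_sq (π / 4) - sin (π / 4) ^ 2 * hc
      - cos (π / 4) ^ 2 * ha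
  have hcos : cos (π / 4) ≠ 0 := by rw [cos_pi_div_four]; positivity
  have hsin : sin (π / 4) ≠ 0 := by rw [sin_pi_div_four]; positivity
  simpa [hcos, hsin] using hb

theorem exists_eq_mul_of_vanishing_on_circle_prod_circle {F : ℝ → ℝ → ℝ → ℝ → ℝ}
    (a₁ a₂ a₃ b₁ b₂ b₃ b₄ c₁ c₂ c₃ : ℝ)
    (hF : ∀ p q r w, F p q r w =
      a₁ * p ^ 2 + a₂ * p * q + a₃ * q ^ 2 +
        (b₁ * p * r + b₂ * p * w + b₃ * q * r + b₄ * q * w) +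
        (c₁ * r ^ 2 + c₂ * r * w + c₃ * w ^ 2))
    (h : ∀ s t : ℝ, F (cos s) (sin s) (cos t) (sin t) = 0) :
    ∃ k : ℝ, ∀ p q r w, F p q r w = k * (p ^ 2 + q ^ 2 - (r ^ 2 + w ^ 2)) := by
  have h_antipode (s t : ℝ) : F (-cos s) (-sin s) (cos t) (sin t) = 0 := by
    simpa only [cos_add_pi, sin_add_pi] using h (s + π) t
  have hB (s t : ℝ) : b₁ * cos s * cos t + b₂ * cos s * sin t + b₃ * sin s * cos t +
      b₄ * sin s * sin t = 0 := by
    have hst := h s t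
    have hneg := h_antipode s t
    rw [hF] at hst hneg
    linarith
  have hAC (s t : ℝ) : a₁ * cos s ^ 2 + a₂ * cos s * sin s + a₃ * sin s ^ 2 =
      -(c₁ * cos t ^ 2 + c₂ * cos t * sin t + c₃ * sin t ^ 2) := by
    have hst := h s t
    have hneg := h_antipode s t
    rw [hF] at hst hneg
    linarith
  obtain ⟨rfl, rfl, rfl, rfl⟩ := bilinear_coeffs_eq_zero_of_forall_cos_sin hB
  have hA (s : ℝ) : a₁ * cos s ^ 2 + a₂ * cos s * sin s + a₃ * sin s ^ 2 = -c₁ := by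
    simpa using hAC s 0
  have hC (t : ℝ) : c₁ * cos t ^ 2 + c₂ * cos t * sin t + c₃ * sin t ^ 2 = -a₁ := by
    have hA₀ : a₁ * cos 0 ^ 2 + a₂ * cos 0 * sin 0 + a₃ * sin 0 ^ 2 = a₁ := by simp
    linear_combination hAC 0 t - hA₀
  obtain ⟨-, rfl, ha₃⟩ := quadratic_coeffs_of_forall_cos_sin_eq_const hA
  obtain ⟨hc₁, rfl, hc₃⟩ := quadratic_coeffs_of_forall_cos_sin_eq_const hC
  refine ⟨a₁, fun p q r w ↦ ?_⟩
  rw [hF, ha₃, hc₁, hc₃]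
  ring

/-- Up to scalar, `x0·x3 - x1·x2` is the unique real quadratic form vanishing on the
Clifford torus (parametrized so that it is the zero set of `x0·x3 - x1·x2` in `S³`). -/
theorem unique_quadric_on_clifford_torus
    (a0 a1 a2 a3 b01 b02 b03 b12 b13 b23 : ℝ)
    (h : ∀ s t : ℝ,
      (fun x0 x1 x2 x3 : ℝ =>
        a0 * x0 ^ 2 + a1 * x1 ^ 2 + a2 * x2 ^ 2 + a3 * x3 ^ 2 +
          b01 * x0 * x1 + b02 * x0 * x2 + b03 * x0 * x3 +
          b12 * x1 * x2 + b13 * x1 * x3 + b23 * x2 * x3)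
        ((Real.cos s + Real.cos t) / 2) ((Real.sin t + Real.sin s) / 2)
        ((Real.sin t - Real.sin s) / 2) ((Real.cos s - Real.cos t) / 2) = 0) :
    ∃ lam : ℝ, ∀ x0 x1 x2 x3 : ℝ,
      a0 * x0 ^ 2 + a1 * x1 ^ 2 + a2 * x2 ^ 2 + a3 * x3 ^ 2 +
        b01 * x0 * x1 + b02 * x0 * x2 + b03 * x0 * x3 +
        b12 * x1 * x2 + b13 * x1 * x3 + b23 * x2 * x3
        = lam * (x0 * x3 - x1 * x2) := by
  set Q : ℝ → ℝ → ℝ → ℝ → ℝ := fun x0 x1 x2 x3 ↦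
    a0 * x0 ^ 2 + a1 * x1 ^ 2 + a2 * x2 ^ 2 + a3 * x3 ^ 2 +
      b01 * x0 * x1 + b02 * x0 * x2 + b03 * x0 * x3 +
      b12 * x1 * x2 + b13 * x1 * x3 + b23 * x2 * x3 with hQ
  obtain ⟨k, hk⟩ := exists_eq_mul_of_vanishing_on_circle_prod_circle
    (F := fun p q r w ↦ 4 * Q ((p + r) / 2) ((w + q) / 2) ((w - q) / 2) ((p - r) / 2))
    (a0 + a3 + b03) (b01 - b02 + b13 - b23) (a1 + a2 - b12)
    (2 * a0 - 2 * a3) (b01 + b02 + b13 + b23) (b01 - b02 - b13 + b23) (2 * a1 - 2 * a2)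
    (a0 + a3 - b03) (b01 + b02 - b13 - b23) (a1 + a2 + b12)
    (fun p q r w ↦ by simp only [hQ]; ring) (fun s t ↦ by simp only [h, mul_zero])
  refine ⟨k, fun x0 x1 x2 x3 ↦ ?_⟩
  linear_combination hk (x0 + x3) (x1 - x2) (x0 - x3) (x1 + x2) / 4
end
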